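/- Let F : ℝ → ℝ be C², let ξ, u : ℝ → ℝ be C¹, and define the characteristic flow x(s,t) = ξ(s) + F'(u(s))·t. Let s₀, s*, s₁ be C¹ functions of t on an open interval I with x(s₀(t),t) = x(s*(t),t) = x(s₁(t),t) for all t ∈ I. Then the signed area A_Dif(t) = A_Dif(s₀(t), s*(t), s₁(t), t) is differentiable on I and d/dt A_Dif(t) = (d/dt x(s₀(t),t))·(u(s₀(t)) − u(s₁(t))) − (F(u(s₀(t))) − F(u(s₁(t)))). -/

import Mathlib

open MeasureTheory Set

/-- The characteristic flow `x(s,t) = ξ(s) + F'(u(s))·t`. -/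
noncomputable def charFlow (F ξ u : ℝ → ℝ) (s t : ℝ) : ℝ :=
  ξ s + deriv F (u s) * t

/-- The signed area
`A_Dif(s₀,s*,s₁,t) = ½∫_{s₀}^{s₁} (x(s,t)u'(s) − ∂_s x(s,t)·u(s)) ds
  + ½( x(s*,t)(u(s₀) − u(s₁)) + u(s*)(x(s₁,t) − x(s₀,t)) )`. -/
noncomputable def ADif (F ξ u : ℝ → ℝ) (s₀ sm s₁ t : ℝ) : ℝ :=
  (1 / 2) * (∫ s in s₀..s₁,
      (charFlow F ξ u s t * deriv u s - deriv (fun r => charFlow F ξ u r t) s * u s))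
  + (1 / 2) * (charFlow F ξ u sm t * (u s₀ - u s₁)
      + u sm * (charFlow F ξ u s₁ t - charFlow F ξ u s₀ t))

/-!
The integrand of `ADif` has the explicit antiderivative
`G(s,t) = ∫₀ˢ (ξu' − ξ'u) + t·(2F(u(s)) − F'(u(s))·u(s))`, so `A_Dif` is a combination of point
values of `G`, `x` and `u`. Along any curve `s(t)`, writing `X = x(s(t),t)` and `U = u(s(t))`,
one finds `d/dt G(s(t),t) = X·U' − X'·U + 2F(U)`. Since the three points share their position
`x` for all `t`, their `X` and `X'` coincide, and the terms combine to the stated derivative.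
-/

open Topology

noncomputable def wronskianIntegral (ξ u : ℝ → ℝ) (s : ℝ) : ℝ :=
  ∫ r in (0 : ℝ)..s, (ξ r * deriv u r - deriv ξ r * u r)

noncomputable def areaRate (F u : ℝ → ℝ) (s : ℝ) : ℝ :=
  2 * F (u s) - deriv F (u s) * u s

noncomputable def areaPotential (F ξ u : ℝ → ℝ) (s t : ℝ) : ℝ :=
  wronskianIntegral ξ u s + t * areaRate F u s

section

variable {F ξ u : ℝ → ℝ}

lemma hasDerivAt_wronskianIntegral (hξ : ContDiff ℝ 1 ξ) (hu : ContDiff ℝ 1 u) (s : ℝ) :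
    HasDerivAt (wronskianIntegral ξ u) (ξ s * deriv u s - deriv ξ s * u s) s :=
  (((hξ.continuous.mul (hu.continuous_deriv le_rfl)).sub
    ((hξ.continuous_deriv le_rfl).mul hu.continuous)).integral_hasStrictDerivAt 0 s).hasDerivAt

lemma hasDerivAt_areaRate (hF : ContDiff ℝ 2 F) (hu : ContDiff ℝ 1 u) (s : ℝ) :
    HasDerivAt (areaRate F u)
      (deriv F (u s) * deriv u s - deriv (deriv F) (u s) * deriv u s * u s) s := by
  have hu' := (hu.differentiable one_ne_zero s).hasDerivAt
  have hFu := (hF.differentiable two_ne_zero (u s)).hasDerivAt.comp s hu'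
  have hF'u := ((hF.deriv' (n := 1)).differentiable one_ne_zero (u s)).hasDerivAt.comp s hu'
  refine ((hFu.const_mul 2).sub (hF'u.mul hu')).congr_deriv ?_
  simp only [Function.comp_apply]
  ring

lemma hasDerivAt_charFlow_fst (hF : ContDiff ℝ 2 F) (hξ : ContDiff ℝ 1 ξ)
    (hu : ContDiff ℝ 1 u) (s t : ℝ) :
    HasDerivAt (charFlow F ξ u · t) (deriv ξ s + deriv (deriv F) (u s) * deriv u s * t) s := by
  have hF'u := ((hF.deriv' (n := 1)).differentiable one_ne_zero (u s)).hasDerivAt.comp s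
    (hu.differentiable one_ne_zero s).hasDerivAt
  exact (hξ.differentiable one_ne_zero s).hasDerivAt.add (hF'u.mul_const t)

lemma deriv_charFlow_fst (hF : ContDiff ℝ 2 F) (hξ : ContDiff ℝ 1 ξ) (hu : ContDiff ℝ 1 u)
    (t : ℝ) :
    deriv (charFlow F ξ u · t) = fun s => deriv ξ s + deriv (deriv F) (u s) * deriv u s * t :=
  funext fun s => (hasDerivAt_charFlow_fst hF hξ hu s t).deriv

lemma hasDerivAt_areaPotential_fst (hF : ContDiff ℝ 2 F) (hξ : ContDiff ℝ 1 ξ)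
    (hu : ContDiff ℝ 1 u) (s t : ℝ) :
    HasDerivAt (areaPotential F ξ u · t)
      (charFlow F ξ u s t * deriv u s - deriv (charFlow F ξ u · t) s * u s) s := by
  rw [deriv_charFlow_fst hF hξ hu]
  refine ((hasDerivAt_wronskianIntegral hξ hu s).add
    ((hasDerivAt_areaRate hF hu s).const_mul t)).congr_deriv ?_
  simp only [charFlow]
  ring

lemma integral_eq_areaPotential_sub (hF : ContDiff ℝ 2 F) (hξ : ContDiff ℝ 1 ξ)
    (hu : ContDiff ℝ 1 u) (c d t : ℝ) :
    ∫ s in c..d, (charFlow F ξ u s t * deriv u s - deriv (charFlow F ξ u · t) s * u s)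
      = areaPotential F ξ u d t - areaPotential F ξ u c t := by
  refine intervalIntegral.integral_eq_sub_of_hasDerivAt
    (fun s _ => hasDerivAt_areaPotential_fst hF hξ hu s t) (Continuous.intervalIntegrable ?_ c d)
  have := (hF.deriv' (n := 1)).continuous_deriv le_rfl
  have := (hF.deriv' (n := 1)).continuous
  have := hξ.continuous_deriv le_rfl
  have := hu.continuous_deriv le_rfl
  have := hξ.continuous
  have := hu.continuous
  rw [deriv_charFlow_fst hF hξ hu]
  unfold charFlow
  fun_prop

lemma ADif_eq_areaPotential (hF : ContDiff ℝ 2 F) (hξ : ContDiff ℝ 1 ξ) (hu : ContDiff ℝ 1 u)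
    (c m d t : ℝ) :
    ADif F ξ u c m d t
      = 1 / 2 * (areaPotential F ξ u d t - areaPotential F ξ u c t)
        + 1 / 2 * (charFlow F ξ u m t * (u c - u d)
          + u m * (charFlow F ξ u d t - charFlow F ξ u c t)) := by
  rw [ADif, integral_eq_areaPotential_sub hF hξ hu]

lemma hasDerivAt_charFlow_comp (hF : ContDiff ℝ 2 F) (hξ : ContDiff ℝ 1 ξ)
    (hu : ContDiff ℝ 1 u) {s : ℝ → ℝ} {s' t : ℝ} (hs : HasDerivAt s s' t) :
    HasDerivAt (fun τ => charFlow F ξ u (s τ) τ)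
      (deriv (charFlow F ξ u · t) (s t) * s' + deriv F (u (s t))) t := by
  have hξs := (hξ.differentiable one_ne_zero (s t)).hasDerivAt.comp t hs
  have hF'us := ((hF.deriv' (n := 1)).differentiable one_ne_zero (u (s t))).hasDerivAt.comp t
    ((hu.differentiable one_ne_zero (s t)).hasDerivAt.comp t hs)
  rw [deriv_charFlow_fst hF hξ hu]
  refine (hξs.add (hF'us.mul (hasDerivAt_id t))).congr_deriv ?_
  simp only [Function.comp_apply, id]
  ring

lemma hasDerivAt_areaPotential_comp (hF : ContDiff ℝ 2 F) (hξ : ContDiff ℝ 1 ξ)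
    (hu : ContDiff ℝ 1 u) {s : ℝ → ℝ} {s' X' t : ℝ} (hs : HasDerivAt s s' t)
    (hX : HasDerivAt (fun τ => charFlow F ξ u (s τ) τ) X' t) :
    HasDerivAt (fun τ => areaPotential F ξ u (s τ) τ)
      (charFlow F ξ u (s t) t * (deriv u (s t) * s') - X' * u (s t) + 2 * F (u (s t))) t := by
  rw [hX.unique (hasDerivAt_charFlow_comp hF hξ hu hs), deriv_charFlow_fst hF hξ hu]
  refine (((hasDerivAt_wronskianIntegral hξ hu (s t)).comp t hs).add
    ((hasDerivAt_id t).mul ((hasDerivAt_areaRate hF hu (s t)).comp t hs))).congr_deriv ?_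
  simp only [Function.comp_apply, charFlow, areaRate, id]
  ring

end

/-- Differentiability of the signed area along the flow, with the derivative
`d/dt A_Dif(t) = (d/dt x(s₀(t),t))·(u(s₀(t)) − u(s₁(t))) − (F(u(s₀(t))) − F(u(s₁(t))))`. -/
theorem ADif_hasDerivAt
    (F ξ u : ℝ → ℝ) (hF : ContDiff ℝ 2 F) (hξ : ContDiff ℝ 1 ξ) (hu : ContDiff ℝ 1 u)
    (a b : ℝ) (s₀ sm s₁ : ℝ → ℝ)
    (hs₀ : ContDiffOn ℝ 1 s₀ (Ioo a b)) (hsm : ContDiffOn ℝ 1 sm (Ioo a b))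
    (hs₁ : ContDiffOn ℝ 1 s₁ (Ioo a b))
    (hline : ∀ t ∈ Ioo a b, charFlow F ξ u (s₀ t) t = charFlow F ξ u (sm t) t ∧
      charFlow F ξ u (sm t) t = charFlow F ξ u (s₁ t) t) :
    ∀ t ∈ Ioo a b, HasDerivAt (fun τ => ADif F ξ u (s₀ τ) (sm τ) (s₁ τ) τ)
      ((deriv (fun τ => charFlow F ξ u (s₀ τ) τ) t) * (u (s₀ t) - u (s₁ t))
        - (F (u (s₀ t)) - F (u (s₁ t)))) t := by
  intro t ht
  have hIoo : Ioo a b ∈ 𝓝 t := Ioo_mem_nhds ht.1 ht.2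
  have hd : ∀ s : ℝ → ℝ, ContDiffOn ℝ 1 s (Ioo a b) → HasDerivAt s (deriv s t) t :=
    fun s hs => ((hs.differentiableOn one_ne_zero).differentiableAt hIoo).hasDerivAt
  have hU : ∀ s : ℝ → ℝ, ContDiffOn ℝ 1 s (Ioo a b) →
      HasDerivAt (fun τ => u (s τ)) (deriv u (s t) * deriv s t) t :=
    fun s hs => (hu.differentiable one_ne_zero (s t)).hasDerivAt.comp t (hd s hs)
  have hX₀ := (hasDerivAt_charFlow_comp hF hξ hu (hd s₀ hs₀)).differentiableAt.hasDerivAt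
  have hXm : HasDerivAt (fun τ => charFlow F ξ u (sm τ) τ) _ t :=
    hX₀.congr_of_eventuallyEq (by filter_upwards [hIoo] with τ hτ using (hline τ hτ).1.symm)
  have hX₁ : HasDerivAt (fun τ => charFlow F ξ u (s₁ τ) τ) _ t :=
    hX₀.congr_of_eventuallyEq
      (by filter_upwards [hIoo] with τ hτ using ((hline τ hτ).1.trans (hline τ hτ).2).symm)
  have hG₀ := hasDerivAt_areaPotential_comp hF hξ hu (hd s₀ hs₀) hX₀
  have hG₁ := hasDerivAt_areaPotential_comp hF hξ hu (hd s₁ hs₁) hX₁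
  simp only [ADif_eq_areaPotential hF hξ hu]
  refine (((hG₁.sub hG₀).const_mul (1 / 2)).add
    (((hXm.mul ((hU s₀ hs₀).sub (hU s₁ hs₁))).add ((hU sm hsm).mul (hX₁.sub hX₀))).const_mul
      (1 / 2))).congr_deriv ?_
  obtain ⟨e₀, e₁⟩ := hline t ht
  simp only [Pi.sub_apply]
  linear_combination
    -(deriv u (s₀ t) * deriv s₀ t + deriv u (sm t) * deriv sm t) / 2 * e₀
    - (deriv u (s₁ t) * deriv s₁ t + deriv u (sm t) * deriv sm t) / 2 * e₁
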